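/- For every α > 0, the composition φ ↦ φ(-τ(φ)) mapping H^1(-h,0;ℝ) ∩ V_α to ℝ is Lipschitz continuous, being the composition of the Lipschitz evaluation map on V_α × [-h,0] with the Lipschitz map φ ↦ (φ, -τ(φ)). -/

import Mathlib

open MeasureTheory Set
open scoped Interval

/-!
In one dimension the `H¹` norm controls the sup norm: `φ - ψ` is small at some point by the
`L²` bound, and its oscillation is at most `∫ |φ' - ψ'|`, controlled by Cauchy–Schwarz.
Grönwall's inequality transfers this bound to the trajectories `yφ, yψ`. Since `g ≥ ε`, both
trajectories descend with speed at least `ε`, so the times at which they hit `x₁` differ by at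
most `sup |yφ - yψ| / ε`. Finally `φ` is `α`-Lipschitz, which turns the difference of delays
into a difference of values.
-/

lemma gronwallBound_zero_mul (K c ε x : ℝ) :
    gronwallBound 0 K (c * ε) x = c * gronwallBound 0 K ε x := by
  unfold gronwallBound
  split_ifs <;> ring

lemma intervalIntegral.integral_abs_le_sqrt_mul_sqrt {f : ℝ → ℝ} {a b : ℝ} (hab : a ≤ b)
    (hf : IntervalIntegrable f volume a b)
    (hf2 : IntervalIntegrable (fun t => f t ^ 2) volume a b) :
    ∫ t in a..b, |f t| ≤ √(b - a) * √(∫ t in a..b, f t ^ 2) := by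
  set J := ∫ t in a..b, |f t|
  set A := ∫ t in a..b, f t ^ 2
  rcases hab.eq_or_lt with rfl | hlt
  · simp [J]
  -- Integrate `0 ≤ ((b - a) |f| - J)²`.
  have hexpand :
      ∫ t in a..b, ((b - a) * |f t| - J) ^ 2 = (b - a) * ((b - a) * A - J ^ 2) := by
    have hpt : ∀ t, ((b - a) * |f t| - J) ^ 2 =
        (b - a) ^ 2 * f t ^ 2 - 2 * (b - a) * J * |f t| + J ^ 2 := fun t => by
      rw [← sq_abs (f t)]; ring
    simp only [hpt]
    rw [intervalIntegral.integral_add ((hf2.const_mul _).sub (hf.abs.const_mul _))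
        intervalIntegrable_const,
      intervalIntegral.integral_sub (hf2.const_mul _) (hf.abs.const_mul _),
      intervalIntegral.integral_const_mul, intervalIntegral.integral_const_mul,
      intervalIntegral.integral_const, smul_eq_mul]
    ring
  have hnonneg : 0 ≤ (b - a) * ((b - a) * A - J ^ 2) :=
    hexpand ▸ intervalIntegral.integral_nonneg hab fun _ _ => sq_nonneg _
  have hJ : J ^ 2 ≤ (b - a) * A := by nlinarith [sub_pos.mpr hlt]
  calc J ≤ |J| := le_abs_self J
    _ ≤ √((b - a) * A) := Real.abs_le_sqrt hJ
    _ = √(b - a) * √A := Real.sqrt_mul (sub_nonneg.mpr hab) A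

lemma exists_mem_Icc_mul_le_intervalIntegral {f : ℝ → ℝ} {a b : ℝ} (hab : a ≤ b)
    (hf : ContinuousOn f (Icc a b)) : ∃ c ∈ Icc a b, f c * (b - a) ≤ ∫ x in a..b, f x := by
  obtain ⟨c, hc, hmin⟩ := isCompact_Icc.exists_isMinOn (nonempty_Icc.mpr hab) hf
  refine ⟨c, hc, ?_⟩
  have := intervalIntegral.integral_mono_on (μ := volume) hab intervalIntegrable_const
    (hf.intervalIntegrable_of_Icc hab) fun x hx => isMinOn_iff.mp hmin x hx
  rwa [intervalIntegral.integral_const, smul_eq_mul, mul_comm] at this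

lemma abs_intervalIntegral_le_integral_abs_of_mem_Icc {f : ℝ → ℝ} {a b s t : ℝ} (hab : a ≤ b)
    (hf : IntervalIntegrable f volume a b) (hs : s ∈ Icc a b) (ht : t ∈ Icc a b) :
    |∫ u in s..t, f u| ≤ ∫ u in a..b, |f u| := by
  have hsub : Ι s t ⊆ Ι a b := uIoc_subset_uIoc_of_uIcc_subset_uIcc
    (uIcc_subset_uIcc (Icc_subset_uIcc hs) (Icc_subset_uIcc ht))
  calc |∫ u in s..t, f u| ≤ |(∫ u in s..t, |f u|)| := by
        simpa only [Real.norm_eq_abs] using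
          intervalIntegral.norm_integral_le_abs_integral_norm (f := f)
    _ ≤ |(∫ u in a..b, |f u|)| := intervalIntegral.abs_integral_mono_interval hsub
        (ae_of_all _ fun _ => abs_nonneg _) hf.abs
    _ = ∫ u in a..b, |f u| :=
        abs_of_nonneg (intervalIntegral.integral_nonneg hab fun _ _ => abs_nonneg _)

section Primitive

variable {f f' : ℝ → ℝ} {a b : ℝ}

lemma continuousOn_of_eq_add_integral (hab : a ≤ b)
    (hrep : ∀ s ∈ Icc a b, ∀ t ∈ Icc a b, f t = f s + ∫ u in s..t, f' u)
    (hf' : IntervalIntegrable f' volume a b) : ContinuousOn f (Icc a b) := by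
  have ha : a ∈ Icc a b := left_mem_Icc.mpr hab
  have hprim := intervalIntegral.continuousOn_primitive_interval' hf' (a := a)
    (by rwa [uIcc_of_le hab])
  rw [uIcc_of_le hab] at hprim
  exact (continuousOn_const.add hprim).congr fun t ht => hrep a ha t ht

lemma eq_add_integral_sub {g g' : ℝ → ℝ}
    (hf : ∀ s ∈ Icc a b, ∀ t ∈ Icc a b, f t = f s + ∫ u in s..t, f' u)
    (hg : ∀ s ∈ Icc a b, ∀ t ∈ Icc a b, g t = g s + ∫ u in s..t, g' u)
    (hf' : IntervalIntegrable f' volume a b) (hg' : IntervalIntegrable g' volume a b) :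
    ∀ s ∈ Icc a b, ∀ t ∈ Icc a b,
      f t - g t = (f s - g s) + ∫ u in s..t, (f' u - g' u) := by
  intro s hs t ht
  have hsub : uIcc s t ⊆ uIcc a b :=
    uIcc_subset_uIcc (Icc_subset_uIcc hs) (Icc_subset_uIcc ht)
  rw [intervalIntegral.integral_sub (hf'.mono_set hsub) (hg'.mono_set hsub),
    hf s hs t ht, hg s hs t ht]
  ring

/-- The embedding `H¹(a, b) ↪ C[a, b]`, with an explicit constant. -/
lemma abs_le_of_eq_add_integral (hab : a < b)
    (hrep : ∀ s ∈ Icc a b, ∀ t ∈ Icc a b, f t = f s + ∫ u in s..t, f' u)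
    (hf' : IntervalIntegrable f' volume a b)
    (hf'2 : IntervalIntegrable (fun t => f' t ^ 2) volume a b) {t : ℝ} (ht : t ∈ Icc a b) :
    |f t| ≤ (1 / √(b - a) + √(b - a)) *
      √((∫ u in a..b, f u ^ 2) + ∫ u in a..b, f' u ^ 2) := by
  set A := ∫ u in a..b, f u ^ 2
  set B := ∫ u in a..b, f' u ^ 2
  have hA : 0 ≤ A := intervalIntegral.integral_nonneg hab.le fun _ _ => sq_nonneg _
  have hB : 0 ≤ B := intervalIntegral.integral_nonneg hab.le fun _ _ => sq_nonneg _
  have hℓ : 0 < b - a := sub_pos.mpr hab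
  obtain ⟨s, hs, hfs⟩ := exists_mem_Icc_mul_le_intervalIntegral hab.le
    ((continuousOn_of_eq_add_integral hab.le hrep hf').pow 2)
  have hfs' : |f s| ≤ √A / √(b - a) := by
    rw [← Real.sqrt_div hA]
    exact Real.abs_le_sqrt ((le_div_iff₀ hℓ).mpr hfs)
  calc |f t| = |f s + ∫ u in s..t, f' u| := by rw [← hrep s hs t ht]
    _ ≤ |f s| + ∫ u in a..b, |f' u| := (abs_add_le _ _).trans (add_le_add le_rfl
        (abs_intervalIntegral_le_integral_abs_of_mem_Icc hab.le hf' hs ht))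
    _ ≤ √A / √(b - a) + √(b - a) * √B := add_le_add hfs'
        (intervalIntegral.integral_abs_le_sqrt_mul_sqrt hab.le hf' hf'2)
    _ ≤ √(A + B) / √(b - a) + √(b - a) * √(A + B) := by
        gcongr <;> linarith
    _ = (1 / √(b - a) + √(b - a)) * √(A + B) := by ring

lemma abs_sub_le_mul_of_eq_add_integral {α : ℝ}
    (hrep : ∀ s ∈ Icc a b, ∀ t ∈ Icc a b, f t = f s + ∫ u in s..t, f' u)
    (hα : ∀ᵐ u ∂(volume.restrict (Ioo a b)), |f' u| ≤ α) {s t : ℝ}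
    (hs : s ∈ Icc a b) (ht : t ∈ Icc a b) : |f t - f s| ≤ α * |t - s| := by
  rw [Measure.restrict_congr_set Ioo_ae_eq_Ioc] at hα
  have hsub : Ι s t ⊆ Ioc a b := Ioc_subset_Ioc (le_min hs.1 ht.1) (max_le hs.2 ht.2)
  have hα' := (ae_restrict_iff' measurableSet_uIoc).mp
    (ae_restrict_of_ae_restrict_of_subset hsub hα)
  rw [hrep s hs t ht, add_sub_cancel_left]
  simpa only [Real.norm_eq_abs] using intervalIntegral.norm_integral_le_of_norm_le_const_ae
    (f := f') (by simpa only [Real.norm_eq_abs] using hα')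

end Primitive

lemma antitoneOn_add_mul_of_hasDerivWithinAt_le {y y' : ℝ → ℝ} {a b ε : ℝ}
    (hy : ∀ s ∈ Icc a b, HasDerivWithinAt y (y' s) (Icc a b) s)
    (hy' : ∀ s ∈ Ioo a b, y' s ≤ -ε) : AntitoneOn (fun s => y s + ε * s) (Icc a b) := by
  have hlin : ∀ s, HasDerivAt (fun s : ℝ => ε * s) ε s := fun s => by
    simpa using (hasDerivAt_id s).const_mul ε
  refine antitoneOn_of_hasDerivWithinAt_nonpos (convex_Icc a b) (f' := fun s => y' s + ε)
    (fun s hs => (hy s hs).continuousWithinAt.add (hlin s).continuousAt.continuousWithinAt)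
    (fun s hs => ?_) (fun s hs => ?_)
  · rw [interior_Icc] at hs ⊢
    exact ((hy s (Ioo_subset_Icc_self hs)).mono Ioo_subset_Icc_self).fun_add
      (hlin s).hasDerivWithinAt
  · rw [interior_Icc] at hs
    linarith [hy' s hs]

lemma abs_sub_le_div_of_antitoneOn {y₁ y₂ : ℝ → ℝ} {S : Set ℝ} {ε Δ τ₁ τ₂ : ℝ} (hε : 0 < ε)
    (h₁ : AntitoneOn (fun s => y₁ s + ε * s) S) (h₂ : AntitoneOn (fun s => y₂ s + ε * s) S)
    (hΔ : ∀ s ∈ S, |y₁ s - y₂ s| ≤ Δ) (hτ₁ : τ₁ ∈ S) (hτ₂ : τ₂ ∈ S) (heq : y₁ τ₁ = y₂ τ₂) :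
    |τ₁ - τ₂| ≤ Δ / ε := by
  rw [abs_sub_le_iff, le_div_iff₀ hε, le_div_iff₀ hε]
  constructor
  · have := h₂ hτ₂ hτ₁
    rcases le_total τ₂ τ₁ with hle | hle
    · linarith [this hle, (abs_le.mp (hΔ τ₁ hτ₁)).2]
    · nlinarith [mul_le_mul_of_nonneg_right hle hε.le, (abs_nonneg _).trans (hΔ τ₁ hτ₁)]
  · have := h₁ hτ₁ hτ₂
    rcases le_total τ₁ τ₂ with hle | hle
    · linarith [this hle, (abs_le.mp (hΔ τ₂ hτ₂)).1]
    · nlinarith [mul_le_mul_of_nonneg_right hle hε.le, (abs_nonneg _).trans (hΔ τ₂ hτ₂)]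

lemma abs_sub_le_of_hasDerivWithinAt_lipschitz {F : ℝ → ℝ → ℝ} {y₁ y₂ w₁ w₂ : ℝ → ℝ}
    {L M a b : ℝ} (hL : 0 ≤ L)
    (hF : ∀ x z x' z', |F x z - F x' z'| ≤ L * (|x - x'| + |z - z'|))
    (hy₁ : ∀ s ∈ Icc a b, HasDerivWithinAt y₁ (F (y₁ s) (w₁ s)) (Icc a b) s)
    (hy₂ : ∀ s ∈ Icc a b, HasDerivWithinAt y₂ (F (y₂ s) (w₂ s)) (Icc a b) s)
    (ha : y₁ a = y₂ a) (hw : ∀ s ∈ Icc a b, |w₁ s - w₂ s| ≤ M) :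
    ∀ s ∈ Icc a b, |y₁ s - y₂ s| ≤ M * gronwallBound 0 L L (b - a) := by
  intro s hs
  have hcont : ContinuousOn (fun s => y₁ s - y₂ s) (Icc a b) := fun u hu =>
    (hy₁ u hu).continuousWithinAt.sub (hy₂ u hu).continuousWithinAt
  have hderiv : ∀ t ∈ Ico a b, HasDerivWithinAt (fun s => y₁ s - y₂ s)
      (F (y₁ t) (w₁ t) - F (y₂ t) (w₂ t)) (Ici t) t := fun t ht =>
    ((hy₁ t (Ico_subset_Icc_self ht)).sub
      (hy₂ t (Ico_subset_Icc_self ht))).mono_of_mem_nhdsWithin (Icc_mem_nhdsGE_of_mem ht)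
  have hbound : ∀ t ∈ Ico a b,
      ‖F (y₁ t) (w₁ t) - F (y₂ t) (w₂ t)‖ ≤ L * ‖y₁ t - y₂ t‖ + M * L := fun t ht => by
    rw [Real.norm_eq_abs, Real.norm_eq_abs]
    nlinarith [hF (y₁ t) (w₁ t) (y₂ t) (w₂ t), hw t (Ico_subset_Icc_self ht)]
  have hgron := norm_le_gronwallBound_of_norm_deriv_right_le (δ := 0) hcont hderiv
    (by simp [ha]) hbound s hs
  have hM : 0 ≤ M := (abs_nonneg _).trans (hw s hs)
  rw [Real.norm_eq_abs, gronwallBound_zero_mul] at hgron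
  exact hgron.trans (mul_le_mul_of_nonneg_left
    (gronwallBound_mono le_rfl hL hL (by linarith [hs.2])) hM)

theorem eval_tau_lipschitz_general
    (I : Set ℝ)
    (x₁ x₂ b ε K L h α : ℝ) (hh : h = b / K) (hb : 0 < b) (hα : 0 < α)
    (hε : 0 < ε) (hεK : ε ≤ K) (hL : 0 ≤ L)
    (g : ℝ → ℝ → ℝ)
    (hgLip : ∀ x z x' z', |g x z - g x' z'| ≤ L * (|x - x'| + |z - z'|))
    (hbd : ∀ x ∈ Metric.closedBall x₂ b, ∀ z ∈ I, ε ≤ g x z ∧ g x z ≤ K) :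
    ∃ C : ℝ, ∀ φ φ' ψ ψ' : ℝ → ℝ,
      (∀ s ∈ Icc (-h) 0, ∀ t ∈ Icc (-h) 0, φ t = φ s + ∫ u in s..t, φ' u) →
      (∀ s ∈ Icc (-h) 0, ∀ t ∈ Icc (-h) 0, ψ t = ψ s + ∫ u in s..t, ψ' u) →
      IntervalIntegrable φ' volume (-h) 0 →
      IntervalIntegrable ψ' volume (-h) 0 →
      IntervalIntegrable (fun t => (φ t - ψ t) ^ 2) volume (-h) 0 →
      IntervalIntegrable (fun t => (φ' t - ψ' t) ^ 2) volume (-h) 0 →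
      (∀ t ∈ Icc (-h) 0, φ t ∈ I) → (∀ t ∈ Icc (-h) 0, ψ t ∈ I) →
      -- `φ, ψ ∈ V_α`:
      (∀ᵐ t ∂(volume.restrict (Ioo (-h) 0)), |φ' t| ≤ α) →
      (∀ᵐ t ∂(volume.restrict (Ioo (-h) 0)), |ψ' t| ≤ α) →
      ∀ yφ yψ : ℝ → ℝ, yφ 0 = x₂ → yψ 0 = x₂ →
      (∀ s ∈ Icc (0 : ℝ) h, yφ s ∈ Metric.closedBall x₂ b) →
      (∀ s ∈ Icc (0 : ℝ) h, yψ s ∈ Metric.closedBall x₂ b) →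
      (∀ s ∈ Icc (0 : ℝ) h, HasDerivWithinAt yφ (-(g (yφ s) (φ (-s)))) (Icc (0 : ℝ) h) s) →
      (∀ s ∈ Icc (0 : ℝ) h, HasDerivWithinAt yψ (-(g (yψ s) (ψ (-s)))) (Icc (0 : ℝ) h) s) →
      ∀ τφ τψ : ℝ, τφ ∈ Icc (0 : ℝ) h → τψ ∈ Icc (0 : ℝ) h →
      yφ τφ = x₁ → yψ τψ = x₁ →
      |φ (-τφ) - ψ (-τψ)| ≤
        C * Real.sqrt ((∫ u in (-h)..0, (φ u - ψ u) ^ 2) +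
            ∫ u in (-h)..0, (φ' u - ψ' u) ^ 2) := by
  have hhpos : 0 < h := hh ▸ div_pos hb (hε.trans_le hεK)
  refine ⟨(1 / √h + √h) * (α * gronwallBound 0 L L h / ε + 1), ?_⟩
  intro φ φ' ψ ψ' hφrep hψrep hφ' hψ' _ hd'2 hφI hψI hφα _ yφ yψ hyφ0 hyψ0 hyφb hyψb
    hyφd hyψd τφ τψ hτφ hτψ hyφτ hyψτ
  set M := (1 / √h + √h) * √((∫ u in (-h)..0, (φ u - ψ u) ^ 2) +
    ∫ u in (-h)..0, (φ' u - ψ' u) ^ 2)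
  have hneg : ∀ s ∈ Icc 0 h, -s ∈ Icc (-h) 0 := fun s hs =>
    ⟨neg_le_neg hs.2, neg_nonpos.mpr hs.1⟩
  have hsup : ∀ t ∈ Icc (-h) 0, |φ t - ψ t| ≤ M := fun t ht => by
    simpa only [sub_neg_eq_add, zero_add] using
      abs_le_of_eq_add_integral (neg_lt_zero.mpr hhpos)
        (eq_add_integral_sub hφrep hψrep hφ' hψ') (hφ'.sub hψ') hd'2 ht
  have hy : ∀ s ∈ Icc 0 h, |yφ s - yψ s| ≤ M * gronwallBound 0 L L h := by
    simpa only [sub_zero] using abs_sub_le_of_hasDerivWithinAt_lipschitz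
      (F := fun x z => -g x z) (w₁ := fun s => φ (-s)) (w₂ := fun s => ψ (-s)) hL
      (fun x z x' z' => by rw [neg_sub_neg, abs_sub_comm]; exact hgLip x z x' z')
      hyφd hyψd (hyφ0.trans hyψ0.symm) fun s hs => hsup (-s) (hneg s hs)
  have hdescent : ∀ y w : ℝ → ℝ,
      (∀ s ∈ Icc 0 h, HasDerivWithinAt y (-(g (y s) (w (-s)))) (Icc 0 h) s) →
      (∀ s ∈ Icc 0 h, y s ∈ Metric.closedBall x₂ b) → (∀ t ∈ Icc (-h) 0, w t ∈ I) →
      AntitoneOn (fun s => y s + ε * s) (Icc 0 h) := fun y w hyd hyb hwI =>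
    antitoneOn_add_mul_of_hasDerivWithinAt_le hyd fun s hs => neg_le_neg
      (hbd _ (hyb s (Ioo_subset_Icc_self hs)) _ (hwI _ (hneg s (Ioo_subset_Icc_self hs)))).1
  have hτ : |τφ - τψ| ≤ M * gronwallBound 0 L L h / ε :=
    abs_sub_le_div_of_antitoneOn hε (hdescent yφ φ hyφd hyφb hφI)
      (hdescent yψ ψ hyψd hyψb hψI) hy hτφ hτψ (hyφτ.trans hyψτ.symm)
  have hlip : |φ (-τφ) - φ (-τψ)| ≤ α * |τφ - τψ| := by
    simpa only [neg_sub_neg, abs_sub_comm τψ τφ] using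
      abs_sub_le_mul_of_eq_add_integral hφrep hφα (hneg τψ hτψ) (hneg τφ hτφ)
  calc |φ (-τφ) - ψ (-τψ)|
      ≤ |φ (-τφ) - φ (-τψ)| + |φ (-τψ) - ψ (-τψ)| := abs_sub_le _ _ _
    _ ≤ α * (M * gronwallBound 0 L L h / ε) + M :=
        add_le_add (hlip.trans (mul_le_mul_of_nonneg_left hτ hα.le)) (hsup _ (hneg τψ hτψ))
    _ = _ := by ring

/-- Corollary 3.9: for every `α > 0` the map `φ ↦ φ(-τ(φ))` is Lipschitz continuous on
`H^1(-h,0;ℝ) ∩ V_α` with respect to the `H^1` norm, where `τ` is the delay defined by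
`y_φ(τ(φ)) = x₁` for the solution `y_φ` of `y' = -g(y(s),φ(-s))`, `y(0) = x₂`. -/
theorem eval_tau_lipschitz
    (I : Set ℝ) (hIopen : IsOpen I)
    (x₁ x₂ b ε K L h α : ℝ) (hh : h = b / K) (hb : 0 < b) (hα : 0 < α)
    (hε : 0 < ε) (hεK : ε ≤ K) (hL : 0 ≤ L)
    (hgap : x₂ - x₁ ∈ Ioo 0 (b / K * ε))
    (g : ℝ → ℝ → ℝ)
    (hgLip : ∀ x z x' z', |g x z - g x' z'| ≤ L * (|x - x'| + |z - z'|))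
    (hbd : ∀ x ∈ Metric.closedBall x₂ b, ∀ z ∈ I, ε ≤ g x z ∧ g x z ≤ K) :
    ∃ C : ℝ, ∀ φ φ' ψ ψ' : ℝ → ℝ,
      (∀ s ∈ Icc (-h) 0, ∀ t ∈ Icc (-h) 0, φ t = φ s + ∫ u in s..t, φ' u) →
      (∀ s ∈ Icc (-h) 0, ∀ t ∈ Icc (-h) 0, ψ t = ψ s + ∫ u in s..t, ψ' u) →
      IntervalIntegrable φ' volume (-h) 0 →
      IntervalIntegrable ψ' volume (-h) 0 →
      IntervalIntegrable (fun t => (φ t - ψ t) ^ 2) volume (-h) 0 →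
      IntervalIntegrable (fun t => (φ' t - ψ' t) ^ 2) volume (-h) 0 →
      (∀ t ∈ Icc (-h) 0, φ t ∈ I) → (∀ t ∈ Icc (-h) 0, ψ t ∈ I) →
      -- `φ, ψ ∈ V_α`:
      (∀ᵐ t ∂(volume.restrict (Ioo (-h) 0)), |φ' t| ≤ α) →
      (∀ᵐ t ∂(volume.restrict (Ioo (-h) 0)), |ψ' t| ≤ α) →
      ∀ yφ yψ : ℝ → ℝ, yφ 0 = x₂ → yψ 0 = x₂ →
      (∀ s ∈ Icc (0 : ℝ) h, yφ s ∈ Metric.closedBall x₂ b) →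
      (∀ s ∈ Icc (0 : ℝ) h, yψ s ∈ Metric.closedBall x₂ b) →
      (∀ s ∈ Icc (0 : ℝ) h, HasDerivWithinAt yφ (-(g (yφ s) (φ (-s)))) (Icc (0 : ℝ) h) s) →
      (∀ s ∈ Icc (0 : ℝ) h, HasDerivWithinAt yψ (-(g (yψ s) (ψ (-s)))) (Icc (0 : ℝ) h) s) →
      ∀ τφ τψ : ℝ, τφ ∈ Icc (0 : ℝ) h → τψ ∈ Icc (0 : ℝ) h →
      yφ τφ = x₁ → yψ τψ = x₁ →
      |φ (-τφ) - ψ (-τψ)| ≤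
        C * Real.sqrt ((∫ u in (-h)..0, (φ u - ψ u) ^ 2) +
            ∫ u in (-h)..0, (φ' u - ψ' u) ^ 2) :=
  eval_tau_lipschitz_general I x₁ x₂ b ε K L h α hh hb hα hε hεK hL g hgLip hbd
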